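/- Let ν ∈ (0,1), p ≥ 1 and 0 < ε < ν. There exists a constant C > 0 such that for all real a with |a| ≥ 1, the integral over ℝ of dξ/(|ξ|^ν · ⟨ξ-a⟩^p) is at most C/|a|^{ν-ε}. -/
import Mathlib

open MeasureTheory Real Set

/-- The Japanese bracket `⟨x⟩ = (1 + x²)^{1/2}`. -/
noncomputable def jb (x : ℝ) : ℝ := Real.sqrt (1 + x ^ 2)

lemma one_le_jb (x : ℝ) : 1 ≤ jb x := by
  rw [jb]
  nlinarith [Real.sq_sqrt (show (0:ℝ) ≤ 1 + x ^ 2 by positivity),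
    Real.sqrt_nonneg (1 + x ^ 2), sq_nonneg x]

lemma jb_pos (x : ℝ) : 0 < jb x := lt_of_lt_of_le one_pos (one_le_jb x)

lemma abs_le_jb (x : ℝ) : |x| ≤ jb x := by
  rw [jb, ← Real.sqrt_sq_eq_abs]
  exact Real.sqrt_le_sqrt (by nlinarith)

lemma key_pointwise {ν p ε a : ℝ} (hν0 : 0 < ν) (hν1 : ν < 1) (hp : 1 ≤ p)
    (hε0 : 0 < ε) (hεν : ε < ν) (ha : 1 ≤ |a|) {ξ : ℝ} (hξ0 : ξ ≠ 0) (hξa : ξ ≠ a) :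
    1 / (|ξ| ^ ν * jb (ξ - a) ^ p) ≤ (2 / |a|) ^ (ν - ε) *
      (|ξ| ^ (-ν) * max 1 |ξ| ^ (-(1 - ν + ε)) +
       (|ξ - a| ^ (-ε) * max 1 |ξ - a| ^ (-(1:ℝ)) +
        (2 ^ (1 + ε) * (|ξ| ^ (-(0:ℝ)) * max 1 |ξ| ^ (-(1 + ε))) +
         2 ^ (1 + ε) * (|ξ - a| ^ (-(0:ℝ)) * max 1 |ξ - a| ^ (-(1 + ε)))))) := by
  set x := |ξ| with hxdef
  set u := |ξ - a| with hudef
  set b := jb (ξ - a) with hbdef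
  have hx0 : 0 < x := abs_pos.2 hξ0
  have hu0 : 0 < u := abs_pos.2 (sub_ne_zero.2 hξa)
  have hb1 : 1 ≤ b := one_le_jb _
  have hb0 : 0 < b := jb_pos _
  have hub : u ≤ b := abs_le_jb _
  have ha0 : 0 < |a| := lt_of_lt_of_le one_pos ha
  have hR : (0:ℝ) < |a| / 2 := by linarith
  have hP : (0:ℝ) < (2 / |a|) ^ (ν - ε) := Real.rpow_pos_of_pos (by positivity) _
  have h2e : (0:ℝ) < 2 ^ (1 + ε) := Real.rpow_pos_of_pos two_pos _
  have hPinv : (2 / |a|) ^ (ν - ε) = ((|a| / 2) ^ (ν - ε))⁻¹ := by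
    rw [← Real.inv_rpow hR.le, inv_div]
  have haxu : |a| ≤ x + u := by
    calc |a| = |ξ + (a - ξ)| := by ring_nf
    _ ≤ |ξ| + |a - ξ| := abs_add_le _ _
    _ = x + u := by rw [abs_sub_comm]
  have t1 : 0 ≤ x ^ (-ν) * max 1 x ^ (-(1 - ν + ε)) := by positivity
  have t2 : 0 ≤ u ^ (-ε) * max 1 u ^ (-(1:ℝ)) := by positivity
  have t3 : 0 ≤ 2 ^ (1 + ε) * (x ^ (-(0:ℝ)) * max 1 x ^ (-(1 + ε))) := by positivity
  have t4 : 0 ≤ 2 ^ (1 + ε) * (u ^ (-(0:ℝ)) * max 1 u ^ (-(1 + ε))) := by positivity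
  have hD : 0 < x ^ ν * b ^ p := by positivity
  have hbp : b ≤ b ^ p := by
    calc b = b ^ (1:ℝ) := (Real.rpow_one b).symm
    _ ≤ b ^ p := Real.rpow_le_rpow_of_exponent_le hb1 hp
  by_cases hA : x ≤ |a| / 2
  · -- Case A : |ξ| small
    have hab : |a| / 2 ≤ b := by
      have h1 : |a| / 2 ≤ u := by linarith
      linarith
    have hmb : max 1 x ≤ b := max_le hb1 (hA.trans hab)
    have hm0 : (0:ℝ) < max 1 x := lt_of_lt_of_le one_pos (le_max_left _ _)
    have E3 : (|a| / 2) ^ (ν - ε) * max 1 x ^ (1 - ν + ε) ≤ b ^ p := by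
      have E1 : (|a| / 2) ^ (ν - ε) ≤ b ^ (ν - ε) :=
        Real.rpow_le_rpow hR.le hab (by linarith)
      have E2 : max 1 x ^ (1 - ν + ε) ≤ b ^ (p - (ν - ε)) := by
        calc max 1 x ^ (1 - ν + ε) ≤ b ^ (1 - ν + ε) :=
          Real.rpow_le_rpow (by positivity) hmb (by linarith)
        _ ≤ b ^ (p - (ν - ε)) := Real.rpow_le_rpow_of_exponent_le hb1 (by linarith)
      calc (|a| / 2) ^ (ν - ε) * max 1 x ^ (1 - ν + ε)
          ≤ b ^ (ν - ε) * b ^ (p - (ν - ε)) :=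
            mul_le_mul E1 E2 (by positivity) (by positivity)
      _ = b ^ p := by
            rw [← Real.rpow_add hb0]
            norm_num
    calc 1 / (x ^ ν * b ^ p)
        ≤ 1 / (x ^ ν * ((|a| / 2) ^ (ν - ε) * max 1 x ^ (1 - ν + ε))) := by
          apply one_div_le_one_div_of_le (by positivity)
          exact mul_le_mul_of_nonneg_left E3 (by positivity)
    _ = (2 / |a|) ^ (ν - ε) * (x ^ (-ν) * max 1 x ^ (-(1 - ν + ε))) := by
          rw [hPinv, Real.rpow_neg hx0.le, Real.rpow_neg hm0.le, one_div,
            mul_inv, mul_inv]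
          ring
    _ ≤ _ := by
          apply mul_le_mul_of_nonneg_left _ hP.le
          linarith
  · push_neg at hA
    by_cases hC : u ≤ |a| / 2
    · -- Case C : |ξ - a| small
      have hxge : |a| / 2 ≤ x := by linarith
      have hm0 : (0:ℝ) < max 1 u := lt_of_lt_of_le one_pos (le_max_left _ _)
      have e1 : (|a| / 2) ^ (ν - ε) * u ^ ε ≤ x ^ ν := by
        have h1 : (|a| / 2) ^ (ν - ε) ≤ x ^ (ν - ε) :=
          Real.rpow_le_rpow hR.le hxge (by linarith)
        have h2 : u ^ ε ≤ x ^ ε :=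
          Real.rpow_le_rpow hu0.le (hC.trans hxge) hε0.le
        calc (|a| / 2) ^ (ν - ε) * u ^ ε ≤ x ^ (ν - ε) * x ^ ε :=
          mul_le_mul h1 h2 (by positivity) (by positivity)
        _ = x ^ ν := by
              rw [← Real.rpow_add hx0]
              norm_num
      have e2 : max 1 u ^ (1:ℝ) ≤ b ^ p := by
        rw [Real.rpow_one]
        exact le_trans (max_le hb1 hub) hbp
      calc 1 / (x ^ ν * b ^ p)
          ≤ 1 / ((|a| / 2) ^ (ν - ε) * (u ^ ε * max 1 u ^ (1:ℝ))) := by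
            apply one_div_le_one_div_of_le (by positivity)
            calc (|a| / 2) ^ (ν - ε) * (u ^ ε * max 1 u ^ (1:ℝ))
                = ((|a| / 2) ^ (ν - ε) * u ^ ε) * max 1 u ^ (1:ℝ) := by ring
            _ ≤ x ^ ν * b ^ p := mul_le_mul e1 e2 (by positivity) (by positivity)
      _ = (2 / |a|) ^ (ν - ε) * (u ^ (-ε) * max 1 u ^ (-(1:ℝ))) := by
            rw [hPinv, Real.rpow_neg hu0.le, Real.rpow_neg hm0.le, one_div,
              mul_inv, mul_inv]
            try ring
      _ ≤ _ := by
            apply mul_le_mul_of_nonneg_left _ hP.le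
            linarith
    · -- Case D : both large
      push_neg at hC
      by_cases hxu : x ≤ u
      · -- use the x-term
        have hm0 : (0:ℝ) < max 1 x := lt_of_lt_of_le one_pos (le_max_left _ _)
        have hmax2 : max 1 x ≤ 2 * x := max_le (by linarith) (by linarith)
        have key : (|a| / 2) ^ (ν - ε) * (((2:ℝ) ^ (1 + ε))⁻¹ * max 1 x ^ (1 + ε))
            ≤ x ^ ν * b ^ p := by
          have h1 : (|a| / 2) ^ (ν - ε) ≤ x ^ (ν - ε) :=
            Real.rpow_le_rpow hR.le (by linarith) (by linarith)
          have h2 : max 1 x ^ (1 + ε) ≤ 2 ^ (1 + ε) * (x ^ ε * x) := by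
            calc max 1 x ^ (1 + ε) ≤ (2 * x) ^ (1 + ε) :=
              Real.rpow_le_rpow (by positivity) hmax2 (by linarith)
            _ = 2 ^ (1 + ε) * x ^ (1 + ε) := Real.mul_rpow (by norm_num) hx0.le
            _ = 2 ^ (1 + ε) * (x ^ ε * x) := by
                  rw [Real.rpow_add hx0, Real.rpow_one]
                  ring
          have h4 : x ≤ b ^ p := le_trans (le_trans hxu hub) hbp
          have h5 : x ^ (ν - ε) * x ^ ε = x ^ ν := by
            rw [← Real.rpow_add hx0]
            norm_num
          calc (|a| / 2) ^ (ν - ε) * (((2:ℝ) ^ (1 + ε))⁻¹ * max 1 x ^ (1 + ε))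
              ≤ x ^ (ν - ε) * (((2:ℝ) ^ (1 + ε))⁻¹ * (2 ^ (1 + ε) * (x ^ ε * x))) :=
                mul_le_mul h1 (mul_le_mul_of_nonneg_left h2 (by positivity))
                  (by positivity) (by positivity)
          _ = (x ^ (ν - ε) * x ^ ε) * x := by
                rw [← mul_assoc ((2:ℝ) ^ (1 + ε))⁻¹, inv_mul_cancel₀ (ne_of_gt h2e), one_mul]
                ring
          _ = x ^ ν * x := by rw [h5]
          _ ≤ x ^ ν * b ^ p := mul_le_mul_of_nonneg_left h4 (by positivity)
        calc 1 / (x ^ ν * b ^ p)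
            ≤ 1 / ((|a| / 2) ^ (ν - ε) * (((2:ℝ) ^ (1 + ε))⁻¹ * max 1 x ^ (1 + ε))) :=
              one_div_le_one_div_of_le (by positivity) key
        _ = (2 / |a|) ^ (ν - ε) * (2 ^ (1 + ε) * (x ^ (-(0:ℝ)) * max 1 x ^ (-(1 + ε)))) := by
              rw [hPinv, Real.rpow_neg hm0.le, neg_zero, Real.rpow_zero, one_div,
                mul_inv, mul_inv, inv_inv]
              ring
        _ ≤ _ := by
              apply mul_le_mul_of_nonneg_left _ hP.le
              linarith
      · push_neg at hxu
        have hm0 : (0:ℝ) < max 1 u := lt_of_lt_of_le one_pos (le_max_left _ _)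
        have hmax2 : max 1 u ≤ 2 * u := max_le (by linarith) (by linarith)
        have key : (|a| / 2) ^ (ν - ε) * (((2:ℝ) ^ (1 + ε))⁻¹ * max 1 u ^ (1 + ε))
            ≤ x ^ ν * b ^ p := by
          have h1 : (|a| / 2) ^ (ν - ε) ≤ x ^ (ν - ε) :=
            Real.rpow_le_rpow hR.le (by linarith) (by linarith)
          have h2 : max 1 u ^ (1 + ε) ≤ 2 ^ (1 + ε) * (u ^ ε * u) := by
            calc max 1 u ^ (1 + ε) ≤ (2 * u) ^ (1 + ε) :=
              Real.rpow_le_rpow (by positivity) hmax2 (by linarith)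
            _ = 2 ^ (1 + ε) * u ^ (1 + ε) := Real.mul_rpow (by norm_num) hu0.le
            _ = 2 ^ (1 + ε) * (u ^ ε * u) := by
                  rw [Real.rpow_add hu0, Real.rpow_one]
                  ring
          have h3 : u ^ ε ≤ x ^ ε := Real.rpow_le_rpow hu0.le hxu.le hε0.le
          have h4 : u ≤ b ^ p := le_trans hub hbp
          have h5 : x ^ (ν - ε) * x ^ ε = x ^ ν := by
            rw [← Real.rpow_add hx0]
            norm_num
          calc (|a| / 2) ^ (ν - ε) * (((2:ℝ) ^ (1 + ε))⁻¹ * max 1 u ^ (1 + ε))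
              ≤ x ^ (ν - ε) * (((2:ℝ) ^ (1 + ε))⁻¹ * (2 ^ (1 + ε) * (u ^ ε * u))) :=
                mul_le_mul h1 (mul_le_mul_of_nonneg_left h2 (by positivity))
                  (by positivity) (by positivity)
          _ = (x ^ (ν - ε) * u ^ ε) * u := by
                rw [← mul_assoc ((2:ℝ) ^ (1 + ε))⁻¹, inv_mul_cancel₀ (ne_of_gt h2e), one_mul]
                ring
          _ ≤ (x ^ (ν - ε) * x ^ ε) * (b ^ p) := by
                apply mul_le_mul _ h4 hu0.le (by positivity)
                exact mul_le_mul_of_nonneg_left h3 (by positivity)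
          _ = x ^ ν * b ^ p := by rw [h5]
        calc 1 / (x ^ ν * b ^ p)
            ≤ 1 / ((|a| / 2) ^ (ν - ε) * (((2:ℝ) ^ (1 + ε))⁻¹ * max 1 u ^ (1 + ε))) :=
              one_div_le_one_div_of_le (by positivity) key
        _ = (2 / |a|) ^ (ν - ε) * (2 ^ (1 + ε) * (u ^ (-(0:ℝ)) * max 1 u ^ (-(1 + ε)))) := by
              rw [hPinv, Real.rpow_neg hm0.le, neg_zero, Real.rpow_zero, one_div,
                mul_inv, mul_inv, inv_inv]
              ring
        _ ≤ _ := by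
              apply mul_le_mul_of_nonneg_left _ hP.le
              linarith

lemma integrable_aux {α β : ℝ} (hα0 : 0 ≤ α) (hα1 : α < 1) (hβ : 0 ≤ β)
    (hαβ : 1 < α + β) :
    Integrable (fun x : ℝ => |x| ^ (-α) * max 1 |x| ^ (-β)) := by
  have h1 : IntegrableOn (fun x : ℝ => |x| ^ (-α) * max 1 |x| ^ (-β)) (Ioi 1) := by
    have : IntegrableOn (fun x : ℝ => x ^ (-(α + β))) (Ioi (1:ℝ)) :=
      (integrableOn_Ioi_rpow_iff one_pos).2 (by linarith)
    apply this.congr_fun ?_ measurableSet_Ioi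
    intro x hx
    dsimp only
    have hx1 : (1:ℝ) < x := hx
    rw [abs_of_nonneg (by linarith), max_eq_right hx1.le,
      ← Real.rpow_add (by linarith)]
    ring_nf
  have h2 : IntegrableOn (fun x : ℝ => |x| ^ (-α) * max 1 |x| ^ (-β)) (Ioc 0 1) := by
    have : IntegrableOn (fun x : ℝ => x ^ (-α)) (Ioo (0:ℝ) 2) :=
      (intervalIntegral.integrableOn_Ioo_rpow_iff two_pos).2 (by linarith)
    apply (this.mono_set (fun x hx => ⟨hx.1, lt_of_le_of_lt hx.2 one_lt_two⟩)).congr_fun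
      ?_ measurableSet_Ioc
    intro x hx
    dsimp only
    rw [abs_of_nonneg hx.1.le, max_eq_left hx.2, Real.one_rpow, mul_one]
  have h3 : IntegrableOn (fun x : ℝ => |x| ^ (-α) * max 1 |x| ^ (-β)) (Ioi 0) := by
    rw [show Ioi (0:ℝ) = Ioc 0 1 ∪ Ioi 1 by rw [Set.Ioc_union_Ioi_eq_Ioi]; norm_num]
    exact h2.union h1
  have h4 : IntegrableOn (fun x : ℝ => |x| ^ (-α) * max 1 |x| ^ (-β)) (Iio 0) := by
    rw [← (Measure.measurePreserving_neg (volume : Measure ℝ)).integrableOn_comp_preimage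
        (Homeomorph.neg ℝ).measurableEmbedding]
    simp only [Function.comp_def, abs_neg, neg_preimage, neg_Iio, neg_zero]
    exact h3
  rw [← integrableOn_univ, ← @Iio_union_Ici _ _ (0:ℝ), integrableOn_union,
    integrableOn_Ici_iff_integrableOn_Ioi]
  exact ⟨h4, h3⟩

/-- Lemma on integrals with a singularity at the origin: for `ν ∈ (0,1)`, `p ≥ 1`
and `0 < ε < ν`, for all `a ∈ ℝ` with `|a| ≥ 1`,
`∫_ℝ |ξ|^{-ν} ⟨ξ-a⟩^{-p} dξ ≲ |a|^{-(ν-ε)}`. -/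
theorem integral_singular_bracket_pow_le (ν p ε : ℝ) (hν0 : 0 < ν) (hν1 : ν < 1)
    (hp : 1 ≤ p) (hε0 : 0 < ε) (hεν : ε < ν) :
    ∃ C > 0, ∀ a : ℝ, 1 ≤ |a| →
      (∫ ξ : ℝ, 1 / (|ξ| ^ ν * jb (ξ - a) ^ p))
        ≤ C / |a| ^ (ν - ε) := by
  have hg1 : Integrable (fun x : ℝ => |x| ^ (-ν) * max 1 |x| ^ (-(1 - ν + ε))) :=
    integrable_aux hν0.le hν1 (by linarith) (by linarith)
  have hg2 : Integrable (fun x : ℝ => |x| ^ (-ε) * max 1 |x| ^ (-(1:ℝ))) :=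
    integrable_aux hε0.le (by linarith) (by norm_num) (by linarith)
  have hg3 : Integrable (fun x : ℝ => |x| ^ (-(0:ℝ)) * max 1 |x| ^ (-(1 + ε))) :=
    integrable_aux le_rfl one_pos (by linarith) (by linarith)
  have h2e : (0:ℝ) < 2 ^ (1 + ε) := Real.rpow_pos_of_pos two_pos _
  set S : ℝ := (∫ x : ℝ, |x| ^ (-ν) * max 1 |x| ^ (-(1 - ν + ε)))
    + ((∫ x : ℝ, |x| ^ (-ε) * max 1 |x| ^ (-(1:ℝ)))
    + (2 ^ (1 + ε) * (∫ x : ℝ, |x| ^ (-(0:ℝ)) * max 1 |x| ^ (-(1 + ε)))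
     + 2 ^ (1 + ε) * (∫ x : ℝ, |x| ^ (-(0:ℝ)) * max 1 |x| ^ (-(1 + ε))))) with hS
  have hS0 : 0 ≤ S := by
    have i1 : 0 ≤ ∫ x : ℝ, |x| ^ (-ν) * max 1 |x| ^ (-(1 - ν + ε)) :=
      integral_nonneg fun x => by positivity
    have i2 : 0 ≤ ∫ x : ℝ, |x| ^ (-ε) * max 1 |x| ^ (-(1:ℝ)) :=
      integral_nonneg fun x => by positivity
    have i3 : 0 ≤ ∫ x : ℝ, |x| ^ (-(0:ℝ)) * max 1 |x| ^ (-(1 + ε)) :=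
      integral_nonneg fun x => by positivity
    have := mul_nonneg h2e.le i3
    rw [hS]
    linarith
  have h2ν : (0:ℝ) < 2 ^ (ν - ε) := Real.rpow_pos_of_pos two_pos _
  refine ⟨2 ^ (ν - ε) * S + 1, by nlinarith, ?_⟩
  intro a ha
  have ha0 : (0:ℝ) < |a| := lt_of_lt_of_le one_pos ha
  have hg2a : Integrable (fun ξ : ℝ => |ξ - a| ^ (-ε) * max 1 |ξ - a| ^ (-(1:ℝ))) :=
    hg2.comp_sub_right a
  have hg3a : Integrable (fun ξ : ℝ => |ξ - a| ^ (-(0:ℝ)) * max 1 |ξ - a| ^ (-(1 + ε))) :=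
    hg3.comp_sub_right a
  have hgsum : Integrable (fun ξ : ℝ =>
      |ξ| ^ (-ν) * max 1 |ξ| ^ (-(1 - ν + ε)) +
       (|ξ - a| ^ (-ε) * max 1 |ξ - a| ^ (-(1:ℝ)) +
        (2 ^ (1 + ε) * (|ξ| ^ (-(0:ℝ)) * max 1 |ξ| ^ (-(1 + ε))) +
         2 ^ (1 + ε) * (|ξ - a| ^ (-(0:ℝ)) * max 1 |ξ - a| ^ (-(1 + ε)))))) :=
    hg1.add (hg2a.add ((hg3.const_mul _).add (hg3a.const_mul _)))
  have hmono : (∫ ξ : ℝ, 1 / (|ξ| ^ ν * jb (ξ - a) ^ p))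
      ≤ ∫ ξ : ℝ, (2 / |a|) ^ (ν - ε) *
        (|ξ| ^ (-ν) * max 1 |ξ| ^ (-(1 - ν + ε)) +
         (|ξ - a| ^ (-ε) * max 1 |ξ - a| ^ (-(1:ℝ)) +
          (2 ^ (1 + ε) * (|ξ| ^ (-(0:ℝ)) * max 1 |ξ| ^ (-(1 + ε))) +
           2 ^ (1 + ε) * (|ξ - a| ^ (-(0:ℝ)) * max 1 |ξ - a| ^ (-(1 + ε)))))) := by
    apply integral_mono_of_nonneg
    · filter_upwards with ξ
      have h1 : (0:ℝ) ≤ |ξ| ^ ν := Real.rpow_nonneg (abs_nonneg _) _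
      have h2 : (0:ℝ) ≤ jb (ξ - a) ^ p :=
        Real.rpow_nonneg (Real.sqrt_nonneg _) _
      positivity
    · exact hgsum.const_mul _
    · have h0 : ∀ᵐ ξ : ℝ, ξ ≠ 0 := by
        rw [ae_iff]
        simp only [not_not, setOf_eq_eq_singleton]
        exact measure_singleton 0
      have ha' : ∀ᵐ ξ : ℝ, ξ ≠ a := by
        rw [ae_iff]
        simp only [not_not, setOf_eq_eq_singleton]
        exact measure_singleton a
      filter_upwards [h0, ha'] with ξ hξ0 hξa
      exact key_pointwise hν0 hν1 hp hε0 hεν ha hξ0 hξa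
  have hm3 : Integrable (fun ξ : ℝ =>
      2 ^ (1 + ε) * (|ξ| ^ (-(0:ℝ)) * max 1 |ξ| ^ (-(1 + ε)))) := hg3.const_mul _
  have hm4 : Integrable (fun ξ : ℝ =>
      2 ^ (1 + ε) * (|ξ - a| ^ (-(0:ℝ)) * max 1 |ξ - a| ^ (-(1 + ε)))) := hg3a.const_mul _
  have hm34 : Integrable (fun ξ : ℝ =>
      2 ^ (1 + ε) * (|ξ| ^ (-(0:ℝ)) * max 1 |ξ| ^ (-(1 + ε))) +
      2 ^ (1 + ε) * (|ξ - a| ^ (-(0:ℝ)) * max 1 |ξ - a| ^ (-(1 + ε)))) := hm3.add hm4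
  have hm234 : Integrable (fun ξ : ℝ =>
      |ξ - a| ^ (-ε) * max 1 |ξ - a| ^ (-(1:ℝ)) +
       (2 ^ (1 + ε) * (|ξ| ^ (-(0:ℝ)) * max 1 |ξ| ^ (-(1 + ε))) +
        2 ^ (1 + ε) * (|ξ - a| ^ (-(0:ℝ)) * max 1 |ξ - a| ^ (-(1 + ε))))) :=
    hg2a.add hm34
  have hint : (∫ ξ : ℝ, (2 / |a|) ^ (ν - ε) *
        (|ξ| ^ (-ν) * max 1 |ξ| ^ (-(1 - ν + ε)) +
         (|ξ - a| ^ (-ε) * max 1 |ξ - a| ^ (-(1:ℝ)) +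
          (2 ^ (1 + ε) * (|ξ| ^ (-(0:ℝ)) * max 1 |ξ| ^ (-(1 + ε))) +
           2 ^ (1 + ε) * (|ξ - a| ^ (-(0:ℝ)) * max 1 |ξ - a| ^ (-(1 + ε)))))))
      = (2 / |a|) ^ (ν - ε) * S := by
    rw [integral_const_mul]
    congr 1
    rw [integral_add hg1 hm234, integral_add hg2a hm34, integral_add hm3 hm4,
      integral_const_mul, integral_const_mul,
      integral_sub_right_eq_self (fun x : ℝ => |x| ^ (-ε) * max 1 |x| ^ (-(1:ℝ))) a,
      integral_sub_right_eq_self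
        (fun x : ℝ => |x| ^ (-(0:ℝ)) * max 1 |x| ^ (-(1 + ε))) a]
  have hfin : (2 / |a|) ^ (ν - ε) * S ≤ (2 ^ (ν - ε) * S + 1) / |a| ^ (ν - ε) := by
    have hA : (0:ℝ) < |a| ^ (ν - ε) := Real.rpow_pos_of_pos ha0 _
    rw [Real.div_rpow (by norm_num) (abs_nonneg a)]
    rw [div_mul_eq_mul_div, div_le_div_iff₀ hA hA]
    nlinarith
  calc (∫ ξ : ℝ, 1 / (|ξ| ^ ν * jb (ξ - a) ^ p))
      ≤ _ := hmono
  _ = (2 / |a|) ^ (ν - ε) * S := hint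
  _ ≤ (2 ^ (ν - ε) * S + 1) / |a| ^ (ν - ε) := hfin
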